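/- arXiv:2003.14117 — 2 statements merged into one kernel-verified Lean document; each statement's English description precedes it below -/
import Mathlib

section
/- The screening operator applied to the conformal vector satisfies S_λ ω_ξ = λ₋₁|λ⟩ (−1 − (λ, ξ) + (ε/2)(λ, λ)), where ω_ξ = (1/ε)(½ bⁱ₋₁b_{i,−1} + ξ₋₂)|0⟩ is the conformal vector of the Heisenberg vertex algebra π₀^ε associated to ξ ∈ h. In particular, if ξ = −ρ̌ + ερ and λ = αᵢ is a simple root of an affine Kac–Moody algebra (so (αᵢ, ρ̌) = 1 and (αᵢ, ρ) = (αᵢ,αᵢ)/2), then S_{αᵢ} ω_ξ = 0. -/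
/-!
On `ω_ξ` the screening reduces to the modes `λ₁`, `λ₂`. Moving them to the vacuum with the Heisenberg
commutator `[a_m, b_n] = ε m (a, b) δ_{m+n,0}` gives `λ₁ ω_ξ = λ₋₁|0⟩` (the dual bases recombine
`(λ, bᵢ) bⁱ₋₁ + (λ, bⁱ) b_{i,−1}` into `2 λ₋₁`), hence `λ₁λ₁ ω_ξ = ε (λ, λ)|0⟩`, and
`λ₂ ω_ξ = 2 (λ, ξ)|0⟩`. Substituting into `S_λ = 𝖳_λ ∘ (−λ₁ + ½ λ₋₁(−λ₂ + λ₁λ₁))` on `ω_ξ`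
gives the formula, whose coefficient vanishes when `(λ, ξ) = −1 + (ε/2)(λ, λ)`.
-/

namespace Heisenberg

section Modes

variable {R P H : Type*} [CommRing R] [AddCommGroup P] [Module R P] [AddCommGroup H] [Module R H]

def CommutationRelations (form : H →ₗ[R] H →ₗ[R] R) (ε : R)
    (cr : ℤ → H →ₗ[R] Module.End R P) : Prop :=
  ∀ (m n : ℤ) (a b : H), cr m a * cr n b - cr n b * cr m a
    = (ε * (m : R) * (if m + n = 0 then form a b else 0)) • (1 : Module.End R P)

def IsVacuum (cr : ℤ → H →ₗ[R] Module.End R P) (vac : P) : Prop :=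
  ∀ n : ℤ, 0 ≤ n → ∀ a : H, cr n a vac = 0

variable {form : H →ₗ[R] H →ₗ[R] R} {ε : R} {cr : ℤ → H →ₗ[R] Module.End R P} {vac : P}

theorem mode_comm_apply (hcomm : CommutationRelations form ε cr) (m n : ℤ) (a b : H) (v : P) :
    cr m a (cr n b v) = cr n b (cr m a v)
      + (ε * (m : R) * (if m + n = 0 then form a b else 0)) • v := by
  have h := LinearMap.ext_iff.mp (hcomm m n a b) v
  simp only [LinearMap.sub_apply, Module.End.mul_apply, LinearMap.smul_apply,
    Module.End.one_apply] at h
  exact sub_eq_iff_eq_add'.mp h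

theorem mode_apply_mode_vac (hcomm : CommutationRelations form ε cr) (hann : IsVacuum cr vac)
    {m : ℤ} (hm : 0 ≤ m) (n : ℤ) (a b : H) :
    cr m a (cr n b vac) = (ε * (m : R) * (if m + n = 0 then form a b else 0)) • vac := by
  rw [mode_comm_apply hcomm, hann m hm, map_zero, zero_add]

theorem mode_apply_mode_mode_vac (hcomm : CommutationRelations form ε cr) (hann : IsVacuum cr vac)
    {m : ℤ} (hm : 0 ≤ m) (n k : ℤ) (a b c : H) :
    cr m a (cr n b (cr k c vac))
      = (ε * (m : R) * (if m + k = 0 then form a c else 0)) • cr n b vac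
        + (ε * (m : R) * (if m + n = 0 then form a b else 0)) • cr k c vac := by
  rw [mode_comm_apply hcomm, mode_apply_mode_vac hcomm hann hm, map_smul]

end Modes

theorem sum_form_smul_map {R H X ι : Type*} [CommRing R] [AddCommGroup H] [Module R H]
    [AddCommGroup X] [Module R X] [Fintype ι] {form : H →ₗ[R] H →ₗ[R] R} {B Bd : ι → H}
    (hrec : ∀ a : H, (∑ i, form a (B i) • Bd i) = a) (f : H →ₗ[R] X) (a : H) :
    ∑ i, form a (B i) • f (Bd i) = f a := by
  simp_rw [← map_smul, ← map_sum, hrec]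

section ConformalVector

variable {K P H ι : Type*} [Field K] [CharZero K] [AddCommGroup P] [Module K P]
  [AddCommGroup H] [Module K H] [Fintype ι]

/-- `ω_ξ = (1/ε)(½ bⁱ₋₁ b_{i,−1} + ξ₋₂)|0⟩`, with `B = (bᵢ)` and `Bd = (bⁱ)`. -/
def conformalVector (cr : ℤ → H →ₗ[K] Module.End K P) (B Bd : ι → H) (ξ : H) (ε : K)
    (vac : P) : P :=
  ε⁻¹ • ((2 : K)⁻¹ • ∑ i, cr (-1) (Bd i) (cr (-1) (B i) vac) + cr (-2) ξ vac)

variable {form : H →ₗ[K] H →ₗ[K] K} {ε : K} {cr : ℤ → H →ₗ[K] Module.End K P} {vac : P}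

theorem mode_one_conformalVector {B Bd : ι → H}
    (hrec1 : ∀ a : H, (∑ i, form a (B i) • Bd i) = a)
    (hrec2 : ∀ a : H, (∑ i, form a (Bd i) • B i) = a) (hε : ε ≠ 0)
    (hcomm : CommutationRelations form ε cr) (hann : IsVacuum cr vac) (ξ lam : H) :
    cr 1 lam (conformalVector cr B Bd ξ ε vac) = cr (-1) lam vac := by
  have hsum1 := sum_form_smul_map hrec1 ((cr (-1)).flip vac) lam
  have hsum2 := sum_form_smul_map hrec2 ((cr (-1)).flip vac) lam
  simp only [LinearMap.flip_apply] at hsum1 hsum2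
  simp only [conformalVector, map_smul, map_add, map_sum,
    mode_apply_mode_mode_vac hcomm hann zero_le_one, mode_apply_mode_vac hcomm hann zero_le_one]
  norm_num [Finset.sum_add_distrib, mul_smul, ← Finset.smul_sum, hsum1, hsum2]
  rw [← two_smul K, smul_smul, smul_smul, smul_smul]
  convert one_smul K _
  field_simp

theorem mode_two_conformalVector {B Bd : ι → H} (hε : ε ≠ 0)
    (hcomm : CommutationRelations form ε cr) (hann : IsVacuum cr vac) (ξ lam : H) :
    cr 2 lam (conformalVector cr B Bd ξ ε vac) = (2 * form lam ξ) • vac := by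
  simp only [conformalVector, map_smul, map_add, map_sum,
    mode_apply_mode_mode_vac hcomm hann zero_le_two, mode_apply_mode_vac hcomm hann zero_le_two]
  norm_num [smul_smul]
  rw [mul_assoc ε, inv_mul_cancel_left₀ hε]

end ConformalVector

end Heisenberg

open Heisenberg in
theorem screening_of_conformal_vector_general
    {P M H ι : Type} [AddCommGroup P] [Module ℂ P] [AddCommGroup M] [Module ℂ M]
    [AddCommGroup H] [Module ℂ H] [Fintype ι]
    (form : H →ₗ[ℂ] H →ₗ[ℂ] ℂ)
    (B Bd : ι → H)
    (hrec1 : ∀ a : H, (∑ i, form a (B i) • Bd i) = a)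
    (hrec2 : ∀ a : H, (∑ i, form a (Bd i) • B i) = a)
    (ξ lam : H) (ε : ℂ) (hε : ε ≠ 0)
    (vac : P)
    (cr : ℤ → H →ₗ[ℂ] Module.End ℂ P)
    (hcomm : ∀ (m n : ℤ) (a b : H),
      cr m a * cr n b - cr n b * cr m a
        = (ε * (m : ℂ) * (if m + n = 0 then form a b else 0)) • (1 : Module.End ℂ P))
    (hann : ∀ n : ℤ, 0 ≤ n → ∀ a : H, cr n a vac = 0)
    (ω : P)
    (hω : ω = ε⁻¹ • ((2 : ℂ)⁻¹ • ∑ i, cr (-1) (Bd i) (cr (-1) (B i) vac) + cr (-2) ξ vac))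
    (Tsh : P →ₗ[ℂ] M) (S : P →ₗ[ℂ] M) (R : P →ₗ[ℂ] P)
    (hS : ∀ v : P, S v =
      Tsh (-(cr 1 lam v)
        + (2 : ℂ)⁻¹ • (cr (-1) lam (-(cr 2 lam v) + cr 1 lam (cr 1 lam v)))
        + R v))
    (hR : R ω = 0) :
    (S ω = (-1 - form lam ξ + ε / 2 * form lam lam) • Tsh (cr (-1) lam vac)) ∧
    (∀ rhoc rho : H, ξ = -rhoc + ε • rho → form lam rhoc = 1 →
      form lam rho = form lam lam / 2 → S ω = 0) := by
  have h1 : cr 1 lam ω = cr (-1) lam vac :=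
    hω ▸ mode_one_conformalVector hrec1 hrec2 hε hcomm hann ξ lam
  have h2 : cr 2 lam ω = (2 * form lam ξ) • vac :=
    hω ▸ mode_two_conformalVector hε hcomm hann ξ lam
  have h11 : cr 1 lam (cr 1 lam ω) = (ε * form lam lam) • vac := by
    rw [h1, mode_apply_mode_vac hcomm hann zero_le_one]
    norm_num
  have hmain : S ω = (-1 - form lam ξ + ε / 2 * form lam lam) • Tsh (cr (-1) lam vac) := by
    rw [hS, hR, add_zero, h11, h2, h1, ← map_smul]
    simp only [map_add, map_neg, map_smul]
    module
  refine ⟨hmain, fun rhoc rho hξ hrhoc hrho => ?_⟩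
  have hcoeff : form lam ξ = -1 + ε / 2 * form lam lam := by
    rw [hξ, map_add, map_neg, map_smul, hrhoc, hrho, smul_eq_mul]
    ring
  rw [hmain, hcoeff, show -1 - (-1 + ε / 2 * form lam lam) + ε / 2 * form lam lam = 0 by ring,
    zero_smul]

theorem screening_of_conformal_vector
    {P M H ι : Type} [AddCommGroup P] [Module ℂ P] [AddCommGroup M] [Module ℂ M]
    [AddCommGroup H] [Module ℂ H] [Fintype ι]
    (form : H →ₗ[ℂ] H →ₗ[ℂ] ℂ) (hsymm : ∀ a b : H, form a b = form b a)
    (B Bd : ι → H)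
    (hrec1 : ∀ a : H, (∑ i, form a (B i) • Bd i) = a)
    (hrec2 : ∀ a : H, (∑ i, form a (Bd i) • B i) = a)
    (ξ lam : H) (ε : ℂ) (hε : ε ≠ 0)
    (vac : P)
    (cr : ℤ → H →ₗ[ℂ] Module.End ℂ P)
    (hcomm : ∀ (m n : ℤ) (a b : H),
      cr m a * cr n b - cr n b * cr m a
        = (ε * (m : ℂ) * (if m + n = 0 then form a b else 0)) • (1 : Module.End ℂ P))
    (hann : ∀ n : ℤ, 0 ≤ n → ∀ a : H, cr n a vac = 0)
    (ω : P)
    (hω : ω = ε⁻¹ • ((2 : ℂ)⁻¹ • ∑ i, cr (-1) (Bd i) (cr (-1) (B i) vac) + cr (-2) ξ vac))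
    (Tsh : P →ₗ[ℂ] M) (S : P →ₗ[ℂ] M) (R : P →ₗ[ℂ] P)
    (hS : ∀ v : P, S v =
      Tsh (-(cr 1 lam v)
        + (2 : ℂ)⁻¹ • (cr (-1) lam (-(cr 2 lam v) + cr 1 lam (cr 1 lam v)))
        + R v))
    (hR : R ω = 0) :
    (S ω = (-1 - form lam ξ + ε / 2 * form lam lam) • Tsh (cr (-1) lam vac)) ∧
    (∀ rhoc rho : H, ξ = -rhoc + ε • rho → form lam rhoc = 1 →
      form lam rho = form lam lam / 2 → S ω = 0) :=
  screening_of_conformal_vector_general form B Bd hrec1 hrec2 ξ lam ε hε vac cr hcomm hann ω hω Tsh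
    S R hS hR
end

section
/- The commutator of the canonical translation operator with the screening-shift satisfies [T^aff, T_{αᵢ}] = α̃_{i,−1} T_{αᵢ}, where T_{αᵢ}: π₀ → π_{αᵢ} is the shift operator with L₀|αᵢ⟩ = |αᵢ⟩, L₋₁|αᵢ⟩ = αᵢ,₋₁|αᵢ⟩, Lⱼ|αᵢ⟩ = 0 for j ≥ 1, and [δ₋ₘ, T_{αᵢ}] = 0 for m > 0; here α̃ᵢ = αᵢ − δ/h and only the terms L₋₁ − (1/h)δ₋₁L₀ of T^aff contribute. Consequently [T^aff, Qᵢ] = −α̃_{i,−1}Qᵢ for the screening operators Qᵢ = −εᵢ^{−1}T_{−αᵢ}S̄_{αᵢ}. -/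
/-!
The summand of `T^aff` indexed by `(n₁, …, nₘ)` applies `L_{n₁+⋯+nₘ−1}` and then `δ₋ₙ₁ ⋯ δ₋ₙₘ`.
The `δ`'s commute with the shift, and so does `Lⱼ` for `j ≥ 1`, so only the empty tuple
(with `L₋₁`) and the tuple `(1)` (with `−(1/h) δ₋₁ L₀`) contribute to the commutator; they
contribute `αᵢ,₋₁` and `−(1/h) δ₋₁`. The statement about `Qᵢ` is then linear algebra.

`V` plays the role of `π₀` and `W` of `π_{αᵢ}`; `DV/DW m` are the operators `δ₋ₘ` and
`AV/AW` the operators `αᵢ,₋₁`.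
-/

/-- The canonical translation operator `T^aff` applied to `w` (sum over ordered tuples
`(n₁,…,nₘ)` of positive integers, encoded as lists). -/
noncomputable def taff {V : Type*} [AddCommGroup V] [Module ℂ V]
    (h : ℂ) (D : ℕ+ → Module.End ℂ V) (L : ℤ → Module.End ℂ V) (w : V) : V :=
  ∑ᶠ l : List ℕ+,
    (((-1 : ℂ) ^ l.length) /
        (h ^ l.length * (l.length.factorial : ℂ) * ((l.map fun n => ((n : ℕ) : ℂ)).prod))) •
      (l.foldr (fun n acc => D n acc)
        (L (((l.map fun n => (n : ℕ)).sum : ℤ) - 1) w))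


namespace TaffShift

theorem eq_nil_or_eq_one_or_two_le_sum (l : List ℕ+) :
    l = [] ∨ l = [1] ∨ 2 ≤ (l.map PNat.val).sum := by
  rcases l with _ | ⟨a, _ | ⟨b, t⟩⟩
  · exact Or.inl rfl
  · rcases eq_or_ne a 1 with rfl | ha
    · exact Or.inr (Or.inl rfl)
    · have : (a : ℕ) ≠ 1 := PNat.coe_eq_one_iff.not.2 ha
      have := a.pos
      right; right; simp only [List.map_cons, List.map_nil, List.sum_cons, List.sum_nil]; omega
  · have := a.pos
    have := b.pos
    right; right; simp only [List.map_cons, List.sum_cons]; omega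

/-- Lists of positive integers with sum `k` are the compositions of `k`. -/
theorem finite_setOf_sum_le (n : ℕ) :
    {l : List ℕ+ | (l.map PNat.val).sum ≤ n}.Finite := by
  have hcomp : (⋃ k ∈ Set.Iic n, Set.range (Composition.blocks (n := k))).Finite :=
    (Set.finite_Iic n).biUnion fun k _ => Set.finite_range _
  refine (hcomp.preimage (List.map_injective_iff.2 PNat.coe_injective).injOn).subset ?_
  intro l hl
  simp only [Set.mem_preimage, Set.mem_iUnion]
  exact ⟨_, hl, ⟨⟨l.map PNat.val, by simp, rfl⟩, rfl⟩⟩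

theorem finsum_pi_single {α M : Type*} [DecidableEq α] [AddCommMonoid M] (i : α) (a : M) :
    ∑ᶠ x, Pi.single i a x = a :=
  (finsum_eq_single _ i fun _ hx => by simp [hx]).trans (by simp)

theorem hasFiniteSupport_pi_single {α M : Type*} [DecidableEq α] [Zero M]
    (i : α) (a : M) : (Pi.single i a).HasFiniteSupport :=
  (Set.finite_singleton i).subset Pi.support_single_subset

noncomputable def taffSummand {V : Type*} [AddCommGroup V] [Module ℂ V]
    (h : ℂ) (D : ℕ+ → Module.End ℂ V) (L : ℤ → Module.End ℂ V) (w : V) (l : List ℕ+) : V :=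
  ((-1 : ℂ) ^ l.length /
      (h ^ l.length * l.length.factorial * (l.map fun n : ℕ+ => (n : ℂ)).prod)) •
    l.foldr (fun n acc => D n acc) (L ((l.map PNat.val).sum - 1 : ℤ) w)

section Summand

variable {V : Type*} [AddCommGroup V] [Module ℂ V]
  (h : ℂ) (D : ℕ+ → Module.End ℂ V) (L : ℤ → Module.End ℂ V)

/-- In `taff`, `l.map fun n => (n : ℕ)` elaborates by first coercing `l` to `List ℕ` through the
list monad, as `l >>= fun a => pure ↑a`. -/
theorem taff_eq_finsum_taffSummand (w : V) : taff h D L w = ∑ᶠ l, taffSummand h D L w l := by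
  simp only [taff, taffSummand, List.pure_def, List.bind_eq_flatMap, ← List.map_eq_flatMap,
    List.map_map, Function.comp_def]

theorem taffSummand_smul (c : ℂ) (w : V) (l : List ℕ+) :
    taffSummand h D L (c • w) l = c • taffSummand h D L w l := by
  rw [taffSummand, taffSummand, map_smul,
    List.foldr_hom (c • ·) fun n x => map_smul (D n) c x, smul_comm]

theorem taff_smul (c : ℂ) (w : V) : taff h D L (c • w) = c • taff h D L w := by
  simp only [taff_eq_finsum_taffSummand, taffSummand_smul, smul_finsum]

variable {h D L} in
theorem hasFiniteSupport_taffSummand {w : V} (hL : ∃ N : ℤ, ∀ n : ℤ, N ≤ n → L n w = 0) :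
    (taffSummand h D L w).HasFiniteSupport := by
  obtain ⟨N, hN⟩ := hL
  refine (finite_setOf_sum_le N.toNat).subset fun l hl => ?_
  by_contra! hlarge
  have hfold : l.foldr (fun n acc => D n acc) (0 : V) = 0 :=
    List.foldr_hom (fun _ : V => (0 : V)) (init := 0) (g₁ := fun n acc => D n acc)
      fun n _ => map_zero (D n)
  apply hl
  rw [Set.mem_ofPred_eq, not_le] at hlarge
  rw [taffSummand, hN _ (by omega), hfold, smul_zero]

end Summand

section Shift

variable {V W : Type*} [AddCommGroup V] [Module ℂ V] [AddCommGroup W] [Module ℂ W]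
  {h : ℂ} {LV : ℤ → Module.End ℂ V} {LW : ℤ → Module.End ℂ W}
  {DV : ℕ+ → Module.End ℂ V} {DW : ℕ+ → Module.End ℂ W} {AW : Module.End ℂ W}
  {Tsh : V →ₗ[ℂ] W}

variable (hL0 : (LW 0) ∘ₗ Tsh = Tsh ∘ₗ (LV 0) + Tsh)
  (hLj : ∀ j : ℤ, 1 ≤ j → (LW j) ∘ₗ Tsh = Tsh ∘ₗ (LV j))
  (hLm1 : (LW (-1)) ∘ₗ Tsh = Tsh ∘ₗ (LV (-1)) + AW ∘ₗ Tsh)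
  (hDsh : ∀ m : ℕ+, (DW m) ∘ₗ Tsh = Tsh ∘ₗ (DV m))
include hL0 hLj hLm1 hDsh

theorem taffSummand_shift (v : V) (l : List ℕ+) :
    taffSummand h DW LW (Tsh v) l =
      Tsh (taffSummand h DV LV v l) + (Pi.single [] (AW (Tsh v)) : List ℕ+ → W) l
        + (Pi.single [1] (-h⁻¹ • DW 1 (Tsh v)) : List ℕ+ → W) l := by
  have hfold (x : V) : l.foldr (fun n acc => DW n acc) (Tsh x)
      = Tsh (l.foldr (fun n acc => DV n acc) x) :=
    List.foldr_hom Tsh fun m x => LinearMap.congr_fun (hDsh m) x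
  rcases eq_nil_or_eq_one_or_two_le_sum l with rfl | rfl | hl
  · simpa [taffSummand] using LinearMap.congr_fun hLm1 v
  · have h0 : LW 0 (Tsh v) = Tsh (LV 0 v) + Tsh v := by simpa using LinearMap.congr_fun hL0 v
    have h1 : DW 1 (Tsh (LV 0 v)) = Tsh (DV 1 (LV 0 v)) := LinearMap.congr_fun (hDsh 1) _
    simp [taffSummand, h0, h1, neg_div]
  · obtain ⟨hnil, hone⟩ : l ≠ [] ∧ l ≠ [1] := by
      constructor <;> (rintro rfl; simp at hl)
    have hj : (1 : ℤ) ≤ (l.map PNat.val).sum - 1 := by omega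
    rw [Pi.single_eq_of_ne hnil, Pi.single_eq_of_ne hone, add_zero, add_zero, taffSummand,
      taffSummand, show LW _ (Tsh v) = Tsh (LV _ v) from LinearMap.congr_fun (hLj _ hj) v, hfold,
      map_smul]

theorem taff_shift_sub_shift_taff {v : V} (hv : ∃ N : ℤ, ∀ n : ℤ, N ≤ n → LV n v = 0) :
    taff h DW LW (Tsh v) - Tsh (taff h DV LV v) = AW (Tsh v) - h⁻¹ • DW 1 (Tsh v) := by
  have hV : (taffSummand h DV LV v).HasFiniteSupport := hasFiniteSupport_taffSummand hv
  have hTV : (fun l => Tsh (taffSummand h DV LV v l)).HasFiniteSupport :=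
    hV.fun_comp Tsh.map_zero
  have hTVA : (fun l => Tsh (taffSummand h DV LV v l)
      + (Pi.single [] (AW (Tsh v)) : List ℕ+ → W) l).HasFiniteSupport :=
    hTV.add (hasFiniteSupport_pi_single _ _)
  rw [taff_eq_finsum_taffSummand, taff_eq_finsum_taffSummand,
    finsum_congr (taffSummand_shift hL0 hLj hLm1 hDsh v),
    finsum_add_distrib hTVA (hasFiniteSupport_pi_single _ _),
    finsum_add_distrib hTV (hasFiniteSupport_pi_single _ _), finsum_pi_single, finsum_pi_single,
    show Tsh (∑ᶠ l, _) = ∑ᶠ l, Tsh _ from Tsh.toAddMonoidHom.map_finsum hV, neg_smul]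
  abel

end Shift

end TaffShift

open TaffShift in
theorem taff_shift_commutator_general
    {V W : Type} [AddCommGroup V] [Module ℂ V] [AddCommGroup W] [Module ℂ W]
    (h : ℂ)
    (LV : ℤ → Module.End ℂ V) (LW : ℤ → Module.End ℂ W)
    (DV : ℕ+ → Module.End ℂ V) (DW : ℕ+ → Module.End ℂ W)
    (AV : Module.End ℂ V) (AW : Module.End ℂ W)
    (Tsh : V →ₗ[ℂ] W)
    (hL0 : (LW 0) ∘ₗ Tsh = Tsh ∘ₗ (LV 0) + Tsh)
    (hLj : ∀ j : ℤ, 1 ≤ j → (LW j) ∘ₗ Tsh = Tsh ∘ₗ (LV j))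
    (hLm1 : (LW (-1)) ∘ₗ Tsh = Tsh ∘ₗ (LV (-1)) + AW ∘ₗ Tsh)
    (hDsh : ∀ m : ℕ+, (DW m) ∘ₗ Tsh = Tsh ∘ₗ (DV m))
    (hsmV : ∀ v : V, ∃ N : ℤ, ∀ n : ℤ, N ≤ n → LV n v = 0) :
    -- [T^aff, 𝖳_{αᵢ}] = α̃_{i,−1} 𝖳_{αᵢ}
    (∀ v : V,
      taff h DW LW (Tsh v) - Tsh (taff h DV LV v)
        = AW (Tsh v) - h⁻¹ • (DW 1) (Tsh v)) ∧
    -- consequently, [T^aff, Qᵢ] = −α̃_{i,−1} Qᵢ for Qᵢ = −εᵢ⁻¹ 𝖳_{−αᵢ} S̄_{αᵢ}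
    (∀ (S : V →ₗ[ℂ] W) (Tsh2 : W →ₗ[ℂ] V) (εi : ℂ) (Q : V →ₗ[ℂ] V),
      (∀ v : V, taff h DW LW (S v) = S (taff h DV LV v)) →
      (∀ w : W, taff h DV LV (Tsh2 w) - Tsh2 (taff h DW LW w)
          = -(AV (Tsh2 w) - h⁻¹ • (DV 1) (Tsh2 w))) →
      Q = (-εi⁻¹) • (Tsh2 ∘ₗ S) →
      ∀ v : V,
        taff h DV LV (Q v) - Q (taff h DV LV v)
          = -(AV (Q v) - h⁻¹ • (DV 1) (Q v))) := by
  refine ⟨fun v => taff_shift_sub_shift_taff hL0 hLj hLm1 hDsh (hsmV v),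
    fun S Tsh2 εi Q hS hT2 hQ v => ?_⟩
  have hQv (x : V) : Q x = (-εi⁻¹) • Tsh2 (S x) := by rw [hQ]; rfl
  rw [hQv, hQv, taff_smul, ← hS, ← smul_sub, hT2]
  simp only [map_smul]
  module

theorem taff_shift_commutator
    {V W : Type} [AddCommGroup V] [Module ℂ V] [AddCommGroup W] [Module ℂ W]
    (h : ℂ)
    (LV : ℤ → Module.End ℂ V) (LW : ℤ → Module.End ℂ W)
    (DV : ℕ+ → Module.End ℂ V) (DW : ℕ+ → Module.End ℂ W)
    (AV : Module.End ℂ V) (AW : Module.End ℂ W)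
    (Tsh : V →ₗ[ℂ] W)
    (hL0 : (LW 0) ∘ₗ Tsh = Tsh ∘ₗ (LV 0) + Tsh)
    (hLj : ∀ j : ℤ, 1 ≤ j → (LW j) ∘ₗ Tsh = Tsh ∘ₗ (LV j))
    (hLm1 : (LW (-1)) ∘ₗ Tsh = Tsh ∘ₗ (LV (-1)) + AW ∘ₗ Tsh)
    (hDsh : ∀ m : ℕ+, (DW m) ∘ₗ Tsh = Tsh ∘ₗ (DV m))
    (hsmV : ∀ v : V, ∃ N : ℤ, ∀ n : ℤ, N ≤ n → LV n v = 0)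
    (hsmW : ∀ w : W, ∃ N : ℤ, ∀ n : ℤ, N ≤ n → LW n w = 0) :
    -- [T^aff, 𝖳_{αᵢ}] = α̃_{i,−1} 𝖳_{αᵢ}
    (∀ v : V,
      taff h DW LW (Tsh v) - Tsh (taff h DV LV v)
        = AW (Tsh v) - h⁻¹ • (DW 1) (Tsh v)) ∧
    -- consequently, [T^aff, Qᵢ] = −α̃_{i,−1} Qᵢ for Qᵢ = −εᵢ⁻¹ 𝖳_{−αᵢ} S̄_{αᵢ}
    (∀ (S : V →ₗ[ℂ] W) (Tsh2 : W →ₗ[ℂ] V) (εi : ℂ) (Q : V →ₗ[ℂ] V),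
      (∀ v : V, taff h DW LW (S v) = S (taff h DV LV v)) →
      (∀ w : W, taff h DV LV (Tsh2 w) - Tsh2 (taff h DW LW w)
          = -(AV (Tsh2 w) - h⁻¹ • (DV 1) (Tsh2 w))) →
      Q = (-εi⁻¹) • (Tsh2 ∘ₗ S) →
      ∀ v : V,
        taff h DV LV (Q v) - Q (taff h DV LV v)
          = -(AV (Q v) - h⁻¹ • (DV 1) (Q v))) :=
  taff_shift_commutator_general h LV LW DV DW AV AW Tsh hL0 hLj hLm1 hDsh hsmV
end
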